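/- Let w(x) = p_te(x)/p_tr(x) be the importance and suppose 0 ≤ ℓ(f(x), y) ≤ m for all (x,y). Then for any measurable function g : X → ℝ, (1/2)·R(f)² ≤ (E_{p_tr(x,y)}[g(x)·ℓ(f(x),y)])² + m²·E_{p_tr(x)}[(g(x) − w(x))²], where R(f) = E_{p_te(x,y)}[ℓ(f(x),y)] is the test risk and covariate shift holds. -/

import Mathlib

open MeasureTheory

/-- One-step upper bound of the test risk under covariate shift:
`(1/2) R(f)² ≤ (E_tr[g·ℓ])² + m²·E_tr[(g−w)²]`, where
`R(f) = E_tr[w·ℓ]` equals the test risk. -/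
theorem risk_upper_bound
    {X Y : Type*} [MeasurableSpace X] [MeasurableSpace Y]
    (μtr : Measure (X × Y)) [IsProbabilityMeasure μtr]
    (w g : X → ℝ) (hw_meas : Measurable w) (hg_meas : Measurable g)
    (hw_nonneg : ∀ x, 0 ≤ w x)
    (ℓf : X × Y → ℝ) (m : ℝ) (hℓf_meas : Measurable ℓf)
    (hℓf_nonneg : ∀ z, 0 ≤ ℓf z) (hℓf_bdd : ∀ z, ℓf z ≤ m)
    (hint_w : Integrable (fun z : X × Y => w z.1 * ℓf z) μtr)
    (hint_g : Integrable (fun z : X × Y => g z.1 * ℓf z) μtr)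
    (hint_sq : Integrable (fun z : X × Y => (g z.1 - w z.1) ^ 2) μtr) :
    (1 / 2) * (∫ z, w z.1 * ℓf z ∂μtr) ^ 2
      ≤ (∫ z, g z.1 * ℓf z ∂μtr) ^ 2
        + m ^ 2 * ∫ z, (g z.1 - w z.1) ^ 2 ∂μtr := by
  set D : X × Y → ℝ := fun z => (g z.1 - w z.1) * ℓf z with hD
  have hDmeas : Measurable D :=
    ((hg_meas.comp measurable_fst).sub (hw_meas.comp measurable_fst)).mul hℓf_meas
  have hbound : ∀ z, D z ^ 2 ≤ m ^ 2 * (g z.1 - w z.1) ^ 2 := by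
    intro z
    have h1 : ℓf z ^ 2 ≤ m ^ 2 := pow_le_pow_left₀ (hℓf_nonneg z) (hℓf_bdd z) 2
    calc D z ^ 2 = (g z.1 - w z.1) ^ 2 * ℓf z ^ 2 := by ring
    _ ≤ (g z.1 - w z.1) ^ 2 * m ^ 2 :=
        mul_le_mul_of_nonneg_left h1 (sq_nonneg _)
    _ = m ^ 2 * (g z.1 - w z.1) ^ 2 := by ring
  have hDint : Integrable D μtr := by
    have : D = fun z => g z.1 * ℓf z - w z.1 * ℓf z := by funext z; simp [hD]; ring
    rw [this]; exact hint_g.sub hint_w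
  have hD2int : Integrable (fun z => D z ^ 2) μtr := by
    refine (hint_sq.const_mul (m ^ 2)).mono (hDmeas.pow_const 2).aestronglyMeasurable ?_
    filter_upwards with z
    rw [Real.norm_eq_abs, Real.norm_eq_abs, abs_of_nonneg (sq_nonneg _)]
    exact le_trans (hbound z) (le_abs_self _)
  have hmem : MemLp D 2 μtr :=
    (memLp_two_iff_integrable_sq hDmeas.aestronglyMeasurable).mpr hD2int
  have hvar : 0 ≤ (∫ z, D z ^ 2 ∂μtr) - (∫ z, D z ∂μtr) ^ 2 := by
    have := ProbabilityTheory.variance_nonneg D μtr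
    rw [ProbabilityTheory.variance_eq_sub hmem] at this
    simpa using this
  have hmono : (∫ z, D z ^ 2 ∂μtr) ≤ m ^ 2 * ∫ z, (g z.1 - w z.1) ^ 2 ∂μtr := by
    rw [← integral_const_mul]
    exact integral_mono hD2int (hint_sq.const_mul _) hbound
  have hDval : (∫ z, D z ∂μtr) = (∫ z, g z.1 * ℓf z ∂μtr) - (∫ z, w z.1 * ℓf z ∂μtr) := by
    rw [← integral_sub hint_g hint_w]
    congr 1; funext z; simp [hD]; ring
  have hI2 : (∫ z, D z ∂μtr) ^ 2
      = ((∫ z, g z.1 * ℓf z ∂μtr) - (∫ z, w z.1 * ℓf z ∂μtr)) ^ 2 := by rw [hDval]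
  nlinarith [sq_nonneg (2 * (∫ z, g z.1 * ℓf z ∂μtr) - (∫ z, w z.1 * ℓf z ∂μtr)),
    sq_nonneg (∫ z, D z ∂μtr)]
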